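/- Let N be a normal subgroup of the discrete Heisenberg group Γ. If N has trivial intersection with the center Z of Γ, then N is contained in Z (and hence N is trivial). -/

import Mathlib

open Matrix

/-- A 3×3 matrix is upper unitriangular (Heisenberg) if it has the form
`[[1,a,c],[0,1,b],[0,0,1]]`. -/
def IsHeis {R : Type*} [CommRing R] (M : Matrix (Fin 3) (Fin 3) R) : Prop :=
  M = !![1, M 0 1, M 0 2; 0, 1, M 1 2; 0, 0, 1]

/-- The Heisenberg group over `R`: upper unitriangular 3×3 matrices under
matrix multiplication. -/
def Heis (R : Type*) [CommRing R] : Type _ := {M : Matrix (Fin 3) (Fin 3) R // IsHeis M}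

namespace Heis

variable {R : Type*} [CommRing R]

lemma isHeis_mk (a b c : R) : IsHeis !![1, a, c; 0, 1, b; 0, 0, 1] := by
  unfold IsHeis; norm_num; constructor <;> rfl

lemma exists_abc {M : Matrix (Fin 3) (Fin 3) R} (h : IsHeis M) :
    ∃ a b c, M = !![1, a, c; 0, 1, b; 0, 0, 1] := ⟨_, _, _, h⟩

lemma mul_mk (a b c a' b' c' : R) :
    !![1, a, c; 0, 1, b; 0, 0, 1] * !![1, a', c'; 0, 1, b'; 0, 0, 1]
      = !![1, a + a', c + a * b' + c'; 0, 1, b + b'; 0, 0, 1] := by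
  simp [Matrix.mul_fin_three]; ring_nf; simp

lemma inv_mul_mk (a b c : R) :
    !![1, -a, a * b - c; 0, 1, -b; 0, 0, 1] * !![1, a, c; 0, 1, b; 0, 0, 1]
      = !![1, 0, 0; 0, 1, 0; 0, 0, 1] := by
  rw [mul_mk]; norm_num; ring_nf

instance : Group (Heis R) where
  mul x y := ⟨x.1 * y.1, by
    obtain ⟨a, b, c, hx⟩ := exists_abc x.2
    obtain ⟨a', b', c', hy⟩ := exists_abc y.2
    rw [hx, hy, mul_mk]; exact isHeis_mk _ _ _⟩
  one := ⟨!![1, 0, 0; 0, 1, 0; 0, 0, 1], isHeis_mk 0 0 0⟩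
  inv x := ⟨!![1, -(x.1 0 1), x.1 0 1 * x.1 1 2 - x.1 0 2; 0, 1, -(x.1 1 2); 0, 0, 1],
    isHeis_mk _ _ _⟩
  mul_assoc x y z := Subtype.ext (mul_assoc x.1 y.1 z.1)
  one_mul x := Subtype.ext (by
    show !![1, 0, 0; 0, 1, 0; 0, 0, 1] * x.1 = x.1
    obtain ⟨a, b, c, hx⟩ := exists_abc x.2
    rw [hx, mul_mk]; norm_num)
  mul_one x := Subtype.ext (by
    show x.1 * !![1, 0, 0; 0, 1, 0; 0, 0, 1] = x.1
    obtain ⟨a, b, c, hx⟩ := exists_abc x.2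
    rw [hx, mul_mk]; norm_num)
  inv_mul_cancel x := Subtype.ext (by
    show !![1, -(x.1 0 1), x.1 0 1 * x.1 1 2 - x.1 0 2; 0, 1, -(x.1 1 2); 0, 0, 1] * x.1
        = !![1, 0, 0; 0, 1, 0; 0, 0, 1]
    obtain ⟨a, b, c, hx⟩ := exists_abc x.2
    rw [hx]; simpa using inv_mul_mk a b c)

lemma mul_val (x y : Heis R) : (x * y).1 = x.1 * y.1 := rfl
lemma one_val : (1 : Heis R).1 = !![1, 0, 0; 0, 1, 0; 0, 0, 1] := rfl

/-- The generator γ₁ of the discrete Heisenberg group. -/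
def γ₁ : Heis ℤ := ⟨!![1, 1, 0; 0, 1, 0; 0, 0, 1], isHeis_mk 1 0 0⟩

/-- The generator γ₂ of the discrete Heisenberg group. -/
def γ₂ : Heis ℤ := ⟨!![1, 0, 0; 0, 1, 1; 0, 0, 1], isHeis_mk 0 1 0⟩

end Heis

/-! In a group of nilpotency class two, such as the Heisenberg group, every commutator `⁅x, g⁆`
is central; if `g` lies in a normal subgroup `N`, then `⁅x, g⁆ = (x g x⁻¹) g⁻¹` lies in `N` as
well, hence in `N ⊓ Z = ⊥`. So `N` commutes with everything, i.e. `N ≤ Z`, and then `N = N ⊓ Z = ⊥`. -/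

theorem Subgroup.le_center_of_commutator_le_center {G : Type*} [Group G]
    (hG : _root_.commutator G ≤ Subgroup.center G) (N : Subgroup G) [N.Normal]
    (h : N ⊓ Subgroup.center G = ⊥) : N ≤ Subgroup.center G := by
  have hcomm : ⁅(⊤ : Subgroup G), N⁆ ≤ N ⊓ Subgroup.center G :=
    le_inf (Subgroup.commutator_le_right _ _)
      ((Subgroup.commutator_mono le_rfl le_top).trans hG)
  rwa [h, le_bot_iff, Subgroup.commutator_top_left_eq_bot_iff_le_center] at hcomm

namespace Heis

open scoped commutatorElement

variable {R : Type*} [CommRing R]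

def mk (a b c : R) : Heis R := ⟨!![1, a, c; 0, 1, b; 0, 0, 1], isHeis_mk a b c⟩

lemma exists_eq_mk (x : Heis R) : ∃ a b c, x = mk a b c := by
  obtain ⟨a, b, c, hx⟩ := exists_abc x.2
  exact ⟨a, b, c, Subtype.ext hx⟩

lemma mk_mul_mk (a b c a' b' c' : R) :
    mk a b c * mk a' b' c' = mk (a + a') (b + b') (c + a * b' + c') :=
  Subtype.ext (mul_mk a b c a' b' c')

lemma mk_zero : mk (0 : R) 0 0 = 1 := rfl

lemma inv_mk (a b c : R) : (mk a b c)⁻¹ = mk (-a) (-b) (a * b - c) := by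
  refine (eq_inv_of_mul_eq_one_left ?_).symm
  rw [mk_mul_mk, ← mk_zero]
  congr 1 <;> ring

lemma mk_mem_center (c : R) : mk 0 0 c ∈ Subgroup.center (Heis R) := by
  refine Subgroup.mem_center_iff.mpr fun x => ?_
  obtain ⟨a, b, c', rfl⟩ := exists_eq_mk x
  simp only [mk_mul_mk]
  congr 1 <;> ring

lemma commutatorElement_mk (a b c a' b' c' : R) :
    ⁅mk a b c, mk a' b' c'⁆ = mk 0 0 (a * b' - a' * b) := by
  simp only [commutatorElement_def, inv_mk, mk_mul_mk]
  congr 1 <;> ring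

lemma commutator_le_center : _root_.commutator (Heis R) ≤ Subgroup.center (Heis R) := by
  rw [commutator_def, Subgroup.commutator_le]
  rintro x - y -
  obtain ⟨a, b, c, rfl⟩ := exists_eq_mk x
  obtain ⟨a', b', c', rfl⟩ := exists_eq_mk y
  rw [commutatorElement_mk]
  exact mk_mem_center _

end Heis

/-- A normal subgroup of the discrete Heisenberg group meeting the center trivially
is contained in the center, hence is trivial. -/
theorem normal_subgroup_trivial_center_inter (N : Subgroup (Heis ℤ)) [N.Normal]
    (h : N ⊓ Subgroup.center (Heis ℤ) = ⊥) :
    N ≤ Subgroup.center (Heis ℤ) ∧ N = ⊥ := by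
  have hN : N ≤ Subgroup.center (Heis ℤ) :=
    Subgroup.le_center_of_commutator_le_center Heis.commutator_le_center N h
  exact ⟨hN, by rwa [inf_eq_left.mpr hN] at h⟩
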